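/- Adversary lower bound: Let L be subunitary on 𝒜⊗ℬ and let π⁰,…,π^{T−1} ⪰ 0 on 𝒜⊗ℬ satisfy tr_ℬ(π^{j+1}) = tr_ℬ(L π^j L†) for 0 ≤ j ≤ T−2, together with tr_ℬ(π⁰) = ρ_ξ and tr_ℬ(L π^{T−1} L†) = ρ_τ, where tr(ρ_ξ) = ‖ξ‖² > 0. Then π̄ := Σ_j π^j satisfies tr_ℬ(L π̄ L† − π̄) = ρ_τ − ρ_ξ and tr(π̄)/‖ξ‖² ≤ T. Consequently T ≥ Adv, where Adv is the infimum of tr(σ)/‖ξ‖² over all σ ⪰ 0 with tr_ℬ(L σ L† − σ) = ρ_τ − ρ_ξ. -/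

import Mathlib

open Matrix Kronecker Finset

open scoped ComplexOrder

/-- `L` is subunitary: `‖Lφ‖ ≤ ‖φ‖` for all vectors `φ`. -/
noncomputable def Subunitary {n : Type*} [Fintype n] [DecidableEq n] (L : Matrix n n ℂ) : Prop :=
  ∀ φ : EuclideanSpace ℂ n, ‖Matrix.toEuclideanLin L φ‖ ≤ ‖φ‖

/-- Partial trace over the second factor `B`. -/
noncomputable def ptraceB {A B : Type*} [Fintype B] (M : Matrix (A × B) (A × B) ℂ) :
    Matrix A A ℂ :=
  Matrix.of fun i j => ∑ b : B, M (i, b) (j, b)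

/-- Partial trace over the factors `B` and `C`. -/
noncomputable def ptraceBC {A B C : Type*} [Fintype B] [Fintype C]
    (M : Matrix ((A × B) × C) ((A × B) × C) ℂ) : Matrix A A ℂ :=
  Matrix.of fun i j => ∑ b : B, ∑ c : C, M ((i, b), c) ((j, b), c)

/-- Partial trace over the second factor `C`. -/
noncomputable def ptraceC {H C : Type*} [Fintype C] (M : Matrix (H × C) (H × C) ℂ) :
    Matrix H H ℂ :=
  Matrix.of fun i j => ∑ c : C, M (i, c) (j, c)

/-!
The partial trace is additive and trace-preserving, so summing the constraints
`tr_ℬ π^{j+1} = tr_ℬ (L π^j L†)` over `j` telescopes to `tr_ℬ (L π̄ L† − π̄) = ρ_τ − ρ_ξ`.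
A subunitary `L` has `L†L ≤ 1`, hence `tr (L σ L†) ≤ tr σ` for `σ ⪰ 0`; along the chain the traces
therefore never exceed `tr π⁰ = ‖ξ‖²`, and the `T` summands of `π̄` give `tr π̄ ≤ T ‖ξ‖²`.
-/

section PartialTrace

variable {A B : Type*} [Fintype B]

lemma ptraceB_sub (X Y : Matrix (A × B) (A × B) ℂ) :
    ptraceB (X - Y) = ptraceB X - ptraceB Y := by
  ext i j
  simp [ptraceB, Finset.sum_sub_distrib]

lemma ptraceB_sum {ι : Type*} (s : Finset ι) (f : ι → Matrix (A × B) (A × B) ℂ) :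
    ptraceB (∑ i ∈ s, f i) = ∑ i ∈ s, ptraceB (f i) := by
  ext i j
  simp only [ptraceB, Matrix.of_apply, Matrix.sum_apply]
  exact Finset.sum_comm

lemma trace_ptraceB [Fintype A] (M : Matrix (A × B) (A × B) ℂ) :
    (ptraceB M).trace = M.trace := by
  simp [ptraceB, Matrix.trace, Fintype.sum_prod_type]

lemma ptraceB_conj_sum_sub_sum [Fintype A] (L : Matrix (A × B) (A × B) ℂ) (π : ℕ → Matrix (A × B) (A × B) ℂ)
    {T : ℕ} (hT : 0 < T)
    (hrec : ∀ j, j + 1 < T → ptraceB (π (j + 1)) = ptraceB (L * π j * Lᴴ)) :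
    ptraceB (L * (∑ j ∈ range T, π j) * Lᴴ - ∑ j ∈ range T, π j) =
      ptraceB (L * π (T - 1) * Lᴴ) - ptraceB (π 0) := by
  obtain ⟨n, rfl⟩ := Nat.exists_eq_add_of_lt hT
  have hshift : ∑ j ∈ range n, ptraceB (L * π j * Lᴴ) = ∑ j ∈ range n, ptraceB (π (j + 1)) :=
    Finset.sum_congr rfl fun j hj => (hrec j (by simp at hj; omega)).symm
  rw [ptraceB_sub, Finset.mul_sum, Finset.sum_mul, ptraceB_sum, ptraceB_sum, zero_add,
    Finset.sum_range_succ, Finset.sum_range_succ', hshift, Nat.add_sub_cancel]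
  abel

end PartialTrace

section Subunitary

variable {n : Type*} [Fintype n] [DecidableEq n] {L : Matrix n n ℂ}

omit [DecidableEq n] in
lemma star_dotProduct_self_eq_norm_sq (x : n → ℂ) :
    star x ⬝ᵥ x = ((‖WithLp.toLp 2 x‖ ^ 2 : ℝ) : ℂ) := by
  rw [dotProduct_comm, ← EuclideanSpace.inner_eq_star_dotProduct, inner_self_eq_norm_sq_to_K]
  simp

lemma Subunitary.posSemidef_one_sub_conjTranspose_mul_self (hL : Subunitary L) :
    (1 - Lᴴ * L).PosSemidef := by
  refine .of_dotProduct_mulVec_nonneg (by simp [IsHermitian, conjTranspose_sub]) fun x => ?_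
  have hnorm := hL (WithLp.toLp 2 x)
  rw [toLpLin_toLp] at hnorm
  rw [sub_mulVec, one_mulVec, dotProduct_sub, ← mulVec_mulVec, dotProduct_mulVec, ← star_mulVec,
    star_dotProduct_self_eq_norm_sq, star_dotProduct_self_eq_norm_sq, sub_nonneg]
  exact_mod_cast pow_le_pow_left₀ (norm_nonneg _) hnorm 2

open scoped MatrixOrder in
lemma Subunitary.trace_conj_le (hL : Subunitary L) {σ : Matrix n n ℂ} (hσ : σ.PosSemidef) :
    (L * σ * Lᴴ).trace ≤ σ.trace := by
  obtain ⟨S, rfl⟩ := CStarAlgebra.nonneg_iff_eq_star_mul_self.mp hσ.nonneg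
  have h := (hL.posSemidef_one_sub_conjTranspose_mul_self.mul_mul_conjTranspose_same S).trace_nonneg
  rw [Matrix.mul_sub, Matrix.sub_mul, trace_sub, Matrix.mul_one] at h
  rw [← sub_nonneg, star_eq_conjTranspose]
  convert h using 2
  · exact trace_mul_comm Sᴴ S
  · simpa only [Matrix.mul_assoc] using trace_mul_comm (L * Sᴴ) (S * Lᴴ)

end Subunitary

lemma Subunitary.trace_le_of_ptraceB_chain {A B : Type*} [Fintype A] [Fintype B] [DecidableEq A]
    [DecidableEq B] {L : Matrix (A × B) (A × B) ℂ} (hL : Subunitary L) {T : ℕ}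
    {π : ℕ → Matrix (A × B) (A × B) ℂ} (hpsd : ∀ j < T, (π j).PosSemidef)
    (hrec : ∀ j, j + 1 < T → ptraceB (π (j + 1)) = ptraceB (L * π j * Lᴴ)) :
    ∀ j < T, (π j).trace ≤ (π 0).trace
  | 0, _ => le_rfl
  | j + 1, hj => calc
      (π (j + 1)).trace = (L * π j * Lᴴ).trace := by
        rw [← trace_ptraceB, hrec j hj, trace_ptraceB]
      _ ≤ (π j).trace := hL.trace_conj_le (hpsd j (by omega))
      _ ≤ (π 0).trace := hL.trace_le_of_ptraceB_chain hpsd hrec j (by omega)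

/-- Adversary lower bound: a `T`-step feasible sequence converting `ρξ` to `ρτ`
yields a feasible `π̄` with `tr π̄ / c ≤ T`; hence `T` is at least the adversary
bound (the infimum of `tr σ / c` over feasible PSD `σ`). -/
theorem stmt15 {A B : Type*} [Fintype A] [Fintype B] [DecidableEq A] [DecidableEq B]
    (L : Matrix (A × B) (A × B) ℂ) (hL : Subunitary L)
    (T : ℕ) (hT : 0 < T) (π : ℕ → Matrix (A × B) (A × B) ℂ)
    (hpsd : ∀ j < T, (π j).PosSemidef)
    (hrec : ∀ j, j + 1 < T → ptraceB (π (j + 1)) = ptraceB (L * π j * Lᴴ))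
    (ρξ ρτ : Matrix A A ℂ)
    (h0 : ptraceB (π 0) = ρξ)
    (hend : ptraceB (L * π (T - 1) * Lᴴ) = ρτ)
    (c : ℝ) (hc : 0 < c) (htr : ρξ.trace = (c : ℂ)) :
    ptraceB (L * (∑ j ∈ Finset.range T, π j) * Lᴴ - (∑ j ∈ Finset.range T, π j)) =
        ρτ - ρξ ∧
      (∑ j ∈ Finset.range T, π j).trace.re / c ≤ (T : ℝ) ∧
      sInf {x : ℝ | ∃ σ : Matrix (A × B) (A × B) ℂ, σ.PosSemidef ∧
          ptraceB (L * σ * Lᴴ - σ) = ρτ - ρξ ∧ x = σ.trace.re / c} ≤ (T : ℝ) := by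
  have hfeas := ptraceB_conj_sum_sub_sum L π hT hrec
  rw [h0, hend] at hfeas
  have htrace0 : (π 0).trace = c := by rw [← trace_ptraceB, h0, htr]
  have hbound : (∑ j ∈ range T, π j).trace.re / c ≤ T := by
    rw [div_le_iff₀ hc, trace_sum, Complex.re_sum]
    calc ∑ j ∈ range T, (π j).trace.re ≤ ∑ _j ∈ range T, c :=
          sum_le_sum fun j hj => by
            simpa [htrace0] using Complex.re_le_re
              (hL.trace_le_of_ptraceB_chain hpsd hrec j (mem_range.mp hj))
      _ = T * c := by simp
  refine ⟨hfeas, hbound, (csInf_le ?_ ?_).trans hbound⟩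
  · refine ⟨0, ?_⟩
    rintro x ⟨σ, hσ, -, rfl⟩
    exact div_nonneg (Complex.re_le_re hσ.trace_nonneg) hc.le
  · exact ⟨_, posSemidef_sum _ fun j hj => hpsd j (mem_range.mp hj), hfeas, rfl⟩
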